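/- Let κ be an infinite set, D an ultrafilter on κ, and B_i (i ∈ κ) Boolean algebras. If |∏_{i∈κ} Length(B_i)/D| > Length(∏_{i∈κ} B_i/D), then the linear order ∏_{i∈κ} Length⁺(B_i)/D (the ultraproduct of the ordinals Length⁺(B_i) with their ordinal order) is λ-like for some successor cardinal λ. -/

import Mathlib

open Cardinal Filter

universe u

namespace ShSi641

variable {ι : Type u}

/-- The set-theoretic ultraproduct `∏_{i} B i / D`. -/
def UProd (D : Ultrafilter ι) (B : ι → Type u) : Type u :=
  Quotient ((D : Filter ι).productSetoid B)

namespace UProd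

variable {D : Ultrafilter ι} {B : ι → Type u}

/-- The equivalence class `f/D` of `f ∈ ∏_i B i`. -/
def mk (D : Ultrafilter ι) (f : ∀ i, B i) : UProd D B :=
  Quotient.mk ((D : Filter ι).productSetoid B) f

@[elab_as_elim]
theorem ind {motive : UProd D B → Prop} (h : ∀ f : ∀ i, B i, motive (mk D f)) :
    ∀ x : UProd D B, motive x :=
  Quotient.ind h

/-- Lift of a family of binary relations to the ultraproduct. -/
def uRel (D : Ultrafilter ι) {B : ι → Type u} (r : ∀ i, B i → B i → Prop) :
    UProd D B → UProd D B → Prop :=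
  Quotient.lift₂ (fun f g => ∀ᶠ i in (D : Filter ι), r i (f i) (g i))
    (fun _ _ _ _ hf hg => propext <| eventually_congr <|
      (hf.and hg).mono fun _ ⟨hf', hg'⟩ => by rw [hf', hg'])

theorem uRel_mk {r : ∀ i, B i → B i → Prop} {f g : ∀ i, B i} :
    uRel D r (mk D f) (mk D g) ↔ ∀ᶠ i in (D : Filter ι), r i (f i) (g i) :=
  Iff.rfl

section BA

variable [∀ i, BooleanAlgebra (B i)]

/-- Pointwise binary operations descend to the ultraproduct. -/
def map₂ (op : ∀ i, B i → B i → B i) : UProd D B → UProd D B → UProd D B :=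
  Quotient.map₂ (fun f g i => op i (f i) (g i))
    (fun _ _ hf _ _ hg => (hf.and hg).mono fun _ ⟨hf', hg'⟩ => by
      dsimp only; rw [hf', hg'])

def map₁ (op : ∀ i, B i → B i) : UProd D B → UProd D B :=
  Quotient.map (fun f i => op i (f i))
    (fun _ _ hf => hf.mono fun _ hf' => by dsimp only; rw [hf'])

instance instPartialOrder : PartialOrder (UProd D B) where
  le := uRel D fun _ x y => x ≤ y
  le_refl x := ind (fun f => Eventually.of_forall fun i => le_refl (f i)) x
  le_trans x y z := Quotient.inductionOn₃ x y z fun _ _ _ h1 h2 =>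
    (h1.and h2).mono fun _ ⟨a, b⟩ => a.trans b
  le_antisymm x y := Quotient.inductionOn₂ x y fun _ _ h1 h2 =>
    Quotient.sound <| (h1.and h2).mono fun _ ⟨a, b⟩ => le_antisymm a b

instance instBooleanAlgebra : BooleanAlgebra (UProd D B) where
  sup := map₂ fun _ x y => x ⊔ y
  inf := map₂ fun _ x y => x ⊓ y
  compl := map₁ fun _ x => xᶜ
  sdiff := map₂ fun _ x y => x \ y
  himp := map₂ fun _ x y => x ⇨ y
  top := mk D fun _ => ⊤
  bot := mk D fun _ => ⊥
  le_sup_left x y := Quotient.inductionOn₂ x y fun _ _ =>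
    Eventually.of_forall fun _ => le_sup_left
  le_sup_right x y := Quotient.inductionOn₂ x y fun _ _ =>
    Eventually.of_forall fun _ => le_sup_right
  sup_le x y z := Quotient.inductionOn₃ x y z fun _ _ _ h1 h2 =>
    (h1.and h2).mono fun _ ⟨a, b⟩ => sup_le a b
  inf_le_left x y := Quotient.inductionOn₂ x y fun _ _ =>
    Eventually.of_forall fun _ => inf_le_left
  inf_le_right x y := Quotient.inductionOn₂ x y fun _ _ =>
    Eventually.of_forall fun _ => inf_le_right
  le_inf x y z := Quotient.inductionOn₃ x y z fun _ _ _ h1 h2 =>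
    (h1.and h2).mono fun _ ⟨a, b⟩ => le_inf a b
  le_sup_inf x y z := Quotient.inductionOn₃ x y z fun _ _ _ =>
    Eventually.of_forall fun _ => le_sup_inf
  inf_compl_le_bot x := ind (fun _ => Eventually.of_forall fun _ => inf_compl_eq_bot.le) x
  top_le_sup_compl x := ind (fun _ => Eventually.of_forall fun _ => sup_compl_eq_top.ge) x
  le_top x := ind (fun _ => Eventually.of_forall fun _ => le_top) x
  bot_le x := ind (fun _ => Eventually.of_forall fun _ => bot_le) x
  sdiff_eq x y := Quotient.inductionOn₂ x y fun _ _ =>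
    Quotient.sound <| Eventually.of_forall fun _ => sdiff_eq
  himp_eq x y := Quotient.inductionOn₂ x y fun _ _ =>
    Quotient.sound <| Eventually.of_forall fun _ => himp_eq

end BA

end UProd

/-- `Length(B)`: the sup of cardinalities of subsets of `B` linearly ordered
by the Boolean partial order. -/
noncomputable def baLength (B : Type u) [BooleanAlgebra B] : Cardinal.{u} :=
  ⨆ X : {X : Set B // IsChain (· ≤ ·) X}, #X.1

/-- `Length⁺(B)`: the sup of the cardinal successors of cardinalities of subsets of `B`
linearly ordered by the Boolean partial order. -/
noncomputable def baLengthPlus (B : Type u) [BooleanAlgebra B] : Cardinal.{u} :=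
  ⨆ X : {X : Set B // IsChain (· ≤ ·) X}, Order.succ #X.1


/-- A cardinal is weakly inaccessible if it is an uncountable regular limit cardinal. -/
def IsWeaklyInaccessible (c : Cardinal.{u}) : Prop :=
  Cardinal.aleph0 < c ∧ c.IsRegular ∧ Order.IsSuccLimit c

/-- A (strict) order is `λ`-like if its carrier has cardinality `λ` while every
proper initial segment has cardinality `< λ`. -/
def IsLambdaLike {α : Type u} (r : α → α → Prop) (lam : Cardinal.{u}) : Prop :=
  #α = lam ∧ ∀ x : α, #{y : α // r y x} < lam

/-- An antichain of a Boolean algebra: a set of pairwise disjoint nonzero elements. -/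
def IsBAAntichain {B : Type u} [BooleanAlgebra B] (X : Set B) : Prop :=
  (∀ x ∈ X, x ≠ ⊥) ∧ X.Pairwise fun x y => x ⊓ y = ⊥

/-- The cellularity `c(B)` of a Boolean algebra. -/
noncomputable def baCellularity (B : Type u) [BooleanAlgebra B] : Cardinal.{u} :=
  ⨆ X : {X : Set B // IsBAAntichain X}, #X.1

/-- `c⁺(B)`, the sup of successors of cardinalities of antichains. -/
noncomputable def baCellularityPlus (B : Type u) [BooleanAlgebra B] : Cardinal.{u} :=
  ⨆ X : {X : Set B // IsBAAntichain X}, Order.succ #X.1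

/-- A subset of a Boolean algebra which is well-ordered by the Boolean order. -/
def IsWellOrderedChain {B : Type u} [BooleanAlgebra B] (X : Set B) : Prop :=
  IsChain (· ≤ ·) X ∧ X.WellFoundedOn (· < ·)

/-- The depth of a Boolean algebra. -/
noncomputable def baDepth (B : Type u) [BooleanAlgebra B] : Cardinal.{u} :=
  ⨆ X : {X : Set B // IsWellOrderedChain X}, #X.1

/-- `Depth⁺(B)`. -/
noncomputable def baDepthPlus (B : Type u) [BooleanAlgebra B] : Cardinal.{u} :=
  ⨆ X : {X : Set B // IsWellOrderedChain X}, Order.succ #X.1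

/-- The set `S` is a subalgebra of the Boolean algebra `B` (as a set). -/
def IsSubalgebraSet {B : Type u} [BooleanAlgebra B] (S : Set B) : Prop :=
  ⊥ ∈ S ∧ ⊤ ∈ S ∧ (∀ x ∈ S, xᶜ ∈ S) ∧ (∀ x ∈ S, ∀ y ∈ S, x ⊔ y ∈ S) ∧
    ∀ x ∈ S, ∀ y ∈ S, x ⊓ y ∈ S

/-- `C` is a closed unbounded subset of the ordinal `l`. -/
def ClubIn (C : Set Ordinal.{u}) (l : Ordinal.{u}) : Prop :=
  C ⊆ Set.Iio l ∧ (∀ α < l, ∃ β ∈ C, α ≤ β) ∧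
    ∀ δ < l, δ ≠ 0 → (∀ α < δ, ∃ β ∈ C, α ≤ β ∧ β < δ) → δ ∈ C

/-- `S` is a stationary subset of the ordinal `l`: it meets every club of `l`. -/
def StationaryIn (S : Set Ordinal.{u}) (l : Ordinal.{u}) : Prop :=
  ∀ C, ClubIn C l → (S ∩ C).Nonempty

/-!
A point `f/D` of `∏ Length⁺(B i)/D` has, in each coordinate, fewer than `Length⁺(B i)`
predecessors, so its predecessors embed coordinatewise into chains `C i ⊆ B i`, and the
ultraproduct of the chains `C i` is a chain of `∏ B i/D`. Hence every proper initial segment has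
size at most `ν := Length(∏ B i/D)`, which bounds the whole linear order by `ν⁺`; the hypothesis
bounds it from below by `ν⁺`, so the order is `ν⁺`-like.
-/

section LinearOrder

variable {α : Type u} [LinearOrder α] {κ : Cardinal.{u}}

theorem cof_le_succ_of_forall_mk_Iio_le (h : ∀ x : α, #(Set.Iio x) ≤ κ) :
    Order.cof α ≤ Order.succ κ := by
  by_contra! hlt
  obtain ⟨t, ht⟩ := le_mk_iff_exists_set.1 (hlt.le.trans (Order.cof_le_cardinalMk α))
  have hcof : ¬ IsCofinal t := fun hcof => (Order.cof_le hcof).not_gt (ht ▸ hlt)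
  obtain ⟨x, hx⟩ := not_isCofinal_iff.1 hcof
  have : Order.succ κ ≤ κ := ht ▸ (mk_le_mk_of_subset hx).trans (h x)
  exact (Order.lt_succ κ).not_ge this

theorem mk_le_cof_mul_of_forall_mk_Iio_le (h : ∀ x : α, #(Set.Iio x) ≤ κ) :
    #α ≤ Order.cof α * Order.succ κ := by
  obtain ⟨s, hs, hcard⟩ := Order.exists_cof_eq α
  have hcover : (Set.univ : Set α) = ⋃ x ∈ s, Set.Iic x :=
    (Set.eq_univ_of_forall fun y =>
      let ⟨x, hx, hyx⟩ := hs y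
      Set.mem_iUnion₂.2 ⟨x, hx, Set.mem_Iic.2 hyx⟩).symm
  have hIic : ∀ x : α, #(Set.Iic x) ≤ Order.succ κ := fun x =>
    calc #(Set.Iic x) = #(insert x (Set.Iio x) : Set α) := by rw [Set.Iio_insert]
      _ ≤ κ + 1 := mk_insert_le.trans (add_le_add_left (h x) 1)
      _ ≤ Order.succ κ := add_one_le_of_lt (Order.lt_succ κ)
  calc #α = #(Set.univ : Set α) := mk_univ.symm
    _ ≤ #s * ⨆ x : s, #(Set.Iic x.1) := hcover ▸ mk_biUnion_le _ s
    _ ≤ Order.cof α * Order.succ κ := by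
      rw [hcard]; exact mul_le_mul' le_rfl (ciSup_le' fun x => hIic x)

theorem mk_le_succ_of_forall_mk_Iio_le (h : ∀ x : α, #(Set.Iio x) ≤ κ) :
    #α ≤ Order.succ κ := by
  have hα := mk_le_cof_mul_of_forall_mk_Iio_le h
  rcases lt_or_ge (Order.cof α) ℵ₀ with hfin | hinf
  · calc #α ≤ 1 * Order.succ κ := hα.trans (mul_le_mul' (Order.cof_lt_aleph0_iff.1 hfin) le_rfl)
      _ = Order.succ κ := one_mul _
  · have hcof := cof_le_succ_of_forall_mk_Iio_le h
    calc #α ≤ Order.succ κ * Order.succ κ := hα.trans (mul_le_mul' hcof le_rfl)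
      _ = Order.succ κ := mul_eq_self (hinf.trans hcof)

end LinearOrder

theorem mk_le_succ_of_forall_mk_lt_le {α : Type u} (r : α → α → Prop) [IsStrictTotalOrder α r]
    {κ : Cardinal.{u}} (h : ∀ x : α, #{y : α // r y x} ≤ κ) : #α ≤ Order.succ κ := by
  classical
  let := linearOrderOfSTO r
  exact mk_le_succ_of_forall_mk_Iio_le h

namespace UProd

variable {D : Ultrafilter ι} {A A' : ι → Type u}

theorem mk_eq_mk {f g : ∀ i, A i} : mk D f = mk D g ↔ ∀ᶠ i in (D : Filter ι), f i = g i :=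
  Quotient.eq

def map (φ : ∀ i, A i → A' i) : UProd D A → UProd D A' :=
  Quotient.map (fun f i => φ i (f i)) fun _ _ h => h.mono fun i hi => congrArg (φ i) hi

@[simp]
theorem map_mk (φ : ∀ i, A i → A' i) (f : ∀ i, A i) :
    map φ (mk D f) = mk D fun i => φ i (f i) :=
  rfl

theorem map_injective {φ : ∀ i, A i → A' i} (hφ : ∀ i, Function.Injective (φ i)) :
    Function.Injective (map (D := D) φ) := by
  intro x y
  induction x using ind with | h f =>
  induction y using ind with | h g =>
  simp only [map_mk, mk_eq_mk]
  exact fun h => h.mono fun i hi => hφ i hi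

theorem cardinalMk_le_of_embedding (e : ∀ i, A i ↪ A' i) : #(UProd D A) ≤ #(UProd D A') :=
  mk_le_of_injective (map_injective fun i => (e i).injective)

section LinearOrder

variable [∀ i, LinearOrder (A i)]

instance : IsStrictTotalOrder (UProd D A) (uRel D fun _ a b => a < b) where
  trichotomous x y := by
    induction x using ind with | h f =>
    induction y using ind with | h g =>
    have : ∀ᶠ i in (D : Filter ι), f i < g i ∨ f i = g i ∨ g i < f i :=
      Eventually.of_forall fun i => lt_trichotomy (f i) (g i)
    rw [Ultrafilter.eventually_or, Ultrafilter.eventually_or] at this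
    rw [uRel_mk, uRel_mk, mk_eq_mk]
    exact fun hfg hgf => (this.resolve_left hfg).resolve_right hgf
  irrefl x := by
    induction x using ind with | h f =>
    exact fun h => h.exists.elim fun i hi => lt_irrefl _ hi
  trans x y z := by
    induction x using ind with | h f =>
    induction y using ind with | h g =>
    induction z using ind with | h k =>
    exact fun h₁ h₂ => (h₁.and h₂).mono fun _ h => h.1.trans h.2

theorem cardinalMk_uRel_lt_mk_le {C : ι → Type u} [∀ i, Nonempty (C i)] (f : ∀ i, A i)
    (e : ∀ i, Set.Iio (f i) ↪ C i) :
    #{y : UProd D A // uRel D (fun _ a b => a < b) y (mk D f)} ≤ #(UProd D C) := by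
  let φ (i : ι) (a : A i) : C i := if h : a < f i then e i ⟨a, h⟩ else Classical.arbitrary _
  refine mk_le_of_injective (f := fun y => map φ y.1) ?_
  rintro ⟨x, hx⟩ ⟨y, hy⟩ hxy
  induction x using ind with | h g =>
  induction y using ind with | h g' =>
  refine Subtype.ext (mk_eq_mk.2 ?_)
  filter_upwards [hx, hy, mk_eq_mk.1 hxy] with i hgi hg'i hφ
  simp only [φ, dif_pos hgi, dif_pos hg'i] at hφ
  exact congrArg Subtype.val ((e i).injective hφ)

end LinearOrder

end UProd

section BooleanAlgebra

theorem cardinalMk_le_baLength {B : Type u} [BooleanAlgebra B] {X : Set B}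
    (hX : IsChain (· ≤ ·) X) : #X ≤ baLength B :=
  le_ciSup bddAbove_of_small (⟨X, hX⟩ : {X : Set B // IsChain (· ≤ ·) X})

theorem baLength_le_baLengthPlus (B : Type u) [BooleanAlgebra B] :
    baLength B ≤ baLengthPlus B :=
  ciSup_mono bddAbove_of_small fun _ => Order.le_succ _

theorem exists_isChain_of_lt_baLengthPlus {B : Type u} [BooleanAlgebra B] {c : Cardinal.{u}}
    (hc : c < baLengthPlus B) : ∃ X : Set B, IsChain (· ≤ ·) X ∧ c ≤ #X :=
  let ⟨X, hX⟩ := exists_lt_of_lt_ciSup' hc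
  ⟨X.1, X.2, Order.lt_succ_iff.1 hX⟩

variable {D : Ultrafilter ι} {B : ι → Type u} [∀ i, BooleanAlgebra (B i)]

theorem UProd.isChain_range_map_val {X : ∀ i, Set (B i)} (hX : ∀ i, IsChain (· ≤ ·) (X i)) :
    IsChain (· ≤ ·) (Set.range (map (D := D) fun i (x : X i) => (x : B i))) := by
  rintro _ ⟨x, rfl⟩ _ ⟨y, rfl⟩ -
  induction x using ind with | h f =>
  induction y using ind with | h g =>
  exact Ultrafilter.eventually_or.1 <| Eventually.of_forall fun i => (hX i).total (f i).2 (g i).2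

theorem UProd.cardinalMk_le_baLength_of_isChain {X : ∀ i, Set (B i)}
    (hX : ∀ i, IsChain (· ≤ ·) (X i)) : #(UProd D fun i => X i) ≤ baLength (UProd D B) := by
  rw [← mk_range_eq _ (map_injective fun i => Subtype.val_injective)]
  exact cardinalMk_le_baLength (isChain_range_map_val hX)

theorem cardinalMk_uRel_lt_le_baLength (x : UProd D fun i => (baLengthPlus (B i)).ord.ToType) :
    #{y // UProd.uRel D (fun _ a b => a < b) y x} ≤ baLength (UProd D B) := by
  induction x using UProd.ind with | h f =>
  have hchain (i : ι) : ∃ X : Set (B i), IsChain (· ≤ ·) X ∧ #(Set.Iio (f i)) ≤ #X :=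
    exists_isChain_of_lt_baLengthPlus <| (mk_Iio_lt (f i) (by simp)).trans_eq (mk_ord_toType _)
  choose X hX hle using hchain
  have e (i : ι) : Set.Iio (f i) ↪ (insert ⊥ (X i) : Set (B i)) :=
    Classical.choice <| le_def _ _ |>.1 <| (hle i).trans (mk_le_mk_of_subset (Set.subset_insert _ _))
  calc _ ≤ #(UProd D fun i => (insert ⊥ (X i) : Set (B i))) := UProd.cardinalMk_uRel_lt_mk_le f e
    _ ≤ baLength (UProd D B) :=
      UProd.cardinalMk_le_baLength_of_isChain fun i => (hX i).insert fun _ _ _ => Or.inl bot_le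

end BooleanAlgebra

theorem statement_3_general {ι : Type u} (D : Ultrafilter ι)
    (B : ι → Type u) [∀ i, BooleanAlgebra (B i)]
    (h : baLength (UProd D B) < #(UProd D fun i => (baLength (B i)).out)) :
    ∃ ν : Cardinal.{u},
      IsLambdaLike
        (UProd.uRel D (B := fun i => ((baLengthPlus (B i)).ord).ToType) fun _ a b => a < b)
        (Order.succ ν) := by
  have hseg := cardinalMk_uRel_lt_le_baLength (D := D) (B := B)
  have e (i : ι) : (baLength (B i)).out ↪ (baLengthPlus (B i)).ord.ToType :=
    Classical.choice <| le_def _ _ |>.1 <| by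
      rw [mk_out, mk_ord_toType]; exact baLength_le_baLengthPlus (B i)
  refine ⟨baLength (UProd D B), le_antisymm (mk_le_succ_of_forall_mk_lt_le _ hseg) ?_,
    fun x => (hseg x).trans_lt (Order.lt_succ _)⟩
  exact Order.succ_le_of_lt (h.trans_le (UProd.cardinalMk_le_of_embedding e))

/-- if `|∏ Length(B_i)/D| > Length(∏ B_i/D)` then the ultraproduct of the
ordinals `Length⁺(B_i)` (with the ordinal order) is `λ`-like for some successor cardinal. -/
theorem statement_3 {ι : Type u} [Infinite ι] (D : Ultrafilter ι)
    (B : ι → Type u) [∀ i, BooleanAlgebra (B i)]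
    (h : baLength (UProd D B) < #(UProd D fun i => (baLength (B i)).out)) :
    ∃ ν : Cardinal.{u},
      IsLambdaLike
        (UProd.uRel D (B := fun i => ((baLengthPlus (B i)).ord).ToType) fun _ a b => a < b)
        (Order.succ ν) :=
  statement_3_general D B h

end ShSi641
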